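/- Let r_L(φ) = (1/φ)(φ(cot(πφ) - i) - 1/π). Then along any strictly vertical curve through 0 (intersecting horizontal lines at angles in (δ₁, π - δ₁)): |r_L(φ)| ≤ C, and |r_L'(φ)| ≤ C for |Im φ| ≤ 1 while |r_L'(φ)| ≤ C(e^{-2π|Im φ|} + |Im φ|^{-2}) for |Im φ| ≥ 1, with C depending only on δ₁. -/

import Mathlib

/-!
Write `u = πφ`, so that `rL φ = cot u - u⁻¹ - i` and `rL' φ = π (u⁻² - sin⁻² u)`. For `‖u‖ ≤ 1`
the Taylor bounds for `sin` and `cos` show that both `cot u - u⁻¹` and `u⁻² - sin⁻² u` are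
bounded. Inside the cone `tan δ₁ |Re φ| ≤ |Im φ|` we have `‖φ‖ ≤ (1 + cot δ₁) |Im φ|`, so
`‖u‖ > 1` forces `|Im φ| ≥ ρ(δ₁) > 0`; there `‖sin u‖ ≥ sinh |Im u|` and
`‖cos u‖ ≤ 1 + sinh |Im u|` bound `rL` and `rL'`. For `|Im φ| ≥ 1`,
`sinh (π |Im φ|) ≥ e^{π |Im φ|} / 4` turns the `sin⁻²` term into `e^{-2π |Im φ|}`, and the `u⁻²`
term is `O(|Im φ|⁻²)`.
-/

open Real

/-- The regular part `r_L(φ) = (1/φ)(φ(cot(πφ) - i) - 1/π)` of the kernel of `L₊`. -/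
noncomputable def rL (φ : ℂ) : ℂ :=
  (1 / φ) * (φ * (Complex.cos ((π : ℂ) * φ) / Complex.sin ((π : ℂ) * φ) - Complex.I)
    - 1 / (π : ℂ))

open Complex Filter Topology

theorem Real.inv_sinh_sq_le {a : ℝ} (ha : 1 ≤ a) :
    (Real.sinh a)⁻¹ ^ 2 ≤ 16 * Real.exp (-(2 * a)) := by
  have hexp : Real.exp (-a) ≤ Real.exp a / 2 := by
    linarith [Real.exp_le_one_iff.mpr (by linarith : -a ≤ 0), Real.add_one_le_exp a]
  have hsinh : Real.exp a / 4 ≤ Real.sinh a := by rw [Real.sinh_eq]; linarith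
  calc (Real.sinh a)⁻¹ ^ 2 ≤ (Real.exp a / 4)⁻¹ ^ 2 := by gcongr
    _ = 16 * Real.exp (-(2 * a)) := by
      rw [show -(2 * a) = -a + -a by ring, Real.exp_add, Real.exp_neg]
      field_simp
      norm_num

namespace Complex

variable {u : ℂ}

theorem norm_sin_sub_self_le (hu : ‖u‖ ≤ 1) : ‖sin u - u‖ ≤ ‖u‖ ^ 3 / 4 := by
  have h5 : ‖u‖ ^ 5 ≤ ‖u‖ ^ 3 := pow_le_pow_of_le_one (norm_nonneg u) hu (by norm_num)
  calc ‖sin u - u‖ = ‖(sin u - (u - u ^ 3 / 6)) - u ^ 3 / 6‖ := by ring_nf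
    _ ≤ ‖u‖ ^ 5 / 100 + ‖u‖ ^ 3 / 6 := by
      refine (norm_sub_le _ _).trans (add_le_add (sin_bound hu) ?_)
      simp [norm_pow]
    _ ≤ ‖u‖ ^ 3 / 4 := by linarith [pow_nonneg (norm_nonneg u) 3]

theorem norm_cos_sub_one_le (hu : ‖u‖ ≤ 1) : ‖cos u - 1‖ ≤ ‖u‖ ^ 2 := by
  have h4 : ‖u‖ ^ 4 ≤ ‖u‖ ^ 2 := pow_le_pow_of_le_one (norm_nonneg u) hu (by norm_num)
  calc ‖cos u - 1‖ = ‖(cos u - (1 - u ^ 2 / 2)) - u ^ 2 / 2‖ := by ring_nf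
    _ ≤ ‖u‖ ^ 4 * (5 / 96) + ‖u‖ ^ 2 / 2 := by
      refine (norm_sub_le _ _).trans (add_le_add (cos_bound hu) ?_)
      simp [norm_pow]
    _ ≤ ‖u‖ ^ 2 := by linarith [pow_nonneg (norm_nonneg u) 2]

theorem norm_le_two_mul_norm_sin (hu : ‖u‖ ≤ 1) : ‖u‖ ≤ 2 * ‖sin u‖ := by
  have h3 : ‖u‖ ^ 3 ≤ ‖u‖ := pow_le_of_le_one (norm_nonneg u) hu (by norm_num)
  have htri := norm_sub_norm_le u (u - sin u)
  rw [sub_sub_cancel, norm_sub_rev] at htri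
  linarith [norm_sin_sub_self_le hu, pow_nonneg (norm_nonneg u) 3]

theorem sin_ne_zero_of_norm_le_one (hu0 : u ≠ 0) (hu : ‖u‖ ≤ 1) : sin u ≠ 0 := by
  intro hs
  have hle := norm_le_two_mul_norm_sin hu
  rw [hs, norm_zero, mul_zero] at hle
  exact hu0 (norm_le_zero_iff.mp hle)

theorem norm_cot_sub_inv_le (hu0 : u ≠ 0) (hu : ‖u‖ ≤ 1) : ‖cot u - u⁻¹‖ ≤ 3 * ‖u‖ := by
  have hs := sin_ne_zero_of_norm_le_one hu0 hu
  have hpos : 0 < ‖u‖ := norm_pos_iff.mpr hu0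
  have key : cot u - u⁻¹ = (u * (cos u - 1) - (sin u - u)) / (u * sin u) := by
    rw [cot_eq_cos_div_sin]; field_simp; ring
  have hnum : ‖u * (cos u - 1) - (sin u - u)‖ ≤ ‖u‖ * ‖u‖ ^ 2 + ‖u‖ ^ 3 / 4 := by
    refine (norm_sub_le _ _).trans (add_le_add ?_ (norm_sin_sub_self_le hu))
    rw [norm_mul]
    exact mul_le_mul_of_nonneg_left (norm_cos_sub_one_le hu) hpos.le
  have hden : ‖u‖ * (‖u‖ / 2) ≤ ‖u * sin u‖ := by
    rw [norm_mul]
    exact mul_le_mul_of_nonneg_left (by linarith [norm_le_two_mul_norm_sin hu]) hpos.le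
  rw [key, norm_div, div_le_iff₀ (norm_pos_iff.mpr (mul_ne_zero hu0 hs))]
  nlinarith

theorem norm_inv_sq_sub_inv_sin_sq_le (hu0 : u ≠ 0) (hu : ‖u‖ ≤ 1) :
    ‖u⁻¹ ^ 2 - (sin u)⁻¹ ^ 2‖ ≤ 3 := by
  have hs := sin_ne_zero_of_norm_le_one hu0 hu
  have hpos : 0 < ‖u‖ := norm_pos_iff.mpr hu0
  have key : u⁻¹ ^ 2 - (sin u)⁻¹ ^ 2 = (sin u - u) * (sin u + u) / (u * sin u) ^ 2 := by
    field_simp; ring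
  have hsub := norm_sin_sub_self_le hu
  have hadd : ‖sin u + u‖ ≤ ‖u‖ ^ 3 / 4 + 2 * ‖u‖ := by
    calc ‖sin u + u‖ = ‖(sin u - u) + 2 * u‖ := by ring_nf
      _ ≤ _ := by
        refine (norm_add_le _ _).trans (add_le_add hsub ?_)
        simp
  have hden : ‖u‖ * (‖u‖ / 2) ≤ ‖u * sin u‖ := by
    rw [norm_mul]
    exact mul_le_mul_of_nonneg_left (by linarith [norm_le_two_mul_norm_sin hu]) hpos.le
  have h6 : ‖u‖ ^ 6 ≤ ‖u‖ ^ 4 := pow_le_pow_of_le_one (norm_nonneg u) hu (by norm_num)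
  rw [key, norm_div, norm_pow, norm_mul,
    div_le_iff₀ (pow_pos (norm_pos_iff.mpr (mul_ne_zero hu0 hs)) 2)]
  calc ‖sin u - u‖ * ‖sin u + u‖ ≤ ‖u‖ ^ 3 / 4 * (‖u‖ ^ 3 / 4 + 2 * ‖u‖) :=
        mul_le_mul hsub hadd (norm_nonneg _) (by positivity)
    _ ≤ 3 * (‖u‖ * (‖u‖ / 2)) ^ 2 := by nlinarith
    _ ≤ 3 * ‖u * sin u‖ ^ 2 := by gcongr

theorem sq_norm_sin (z : ℂ) : ‖sin z‖ ^ 2 = Real.sin z.re ^ 2 + Real.sinh z.im ^ 2 := by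
  rw [Complex.sq_norm, normSq_apply, sin_eq, ← ofReal_sin, ← ofReal_cos, ← ofReal_cosh,
    ← ofReal_sinh]
  simp only [add_re, add_im, mul_re, mul_im, ofReal_re, ofReal_im, I_re, I_im]
  nlinarith [Real.cosh_sq z.im, Real.sin_sq_add_cos_sq z.re]

theorem sq_norm_cos (z : ℂ) : ‖cos z‖ ^ 2 = Real.cos z.re ^ 2 + Real.sinh z.im ^ 2 := by
  rw [Complex.sq_norm, normSq_apply, cos_eq, ← ofReal_sin, ← ofReal_cos, ← ofReal_cosh,
    ← ofReal_sinh]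
  simp only [sub_re, sub_im, mul_re, mul_im, ofReal_re, ofReal_im, I_re, I_im]
  nlinarith [Real.cosh_sq z.im, Real.sin_sq_add_cos_sq z.re]

theorem sinh_abs_im_le_norm_sin (z : ℂ) : Real.sinh |z.im| ≤ ‖sin z‖ := by
  refine abs_le_of_sq_le_sq' ?_ (norm_nonneg _) |>.2
  rw [sq_norm_sin, ← Real.abs_sinh, sq_abs]
  nlinarith [sq_nonneg (Real.sin z.re)]

theorem norm_cot_le {z : ℂ} (hz : z.im ≠ 0) : ‖cot z‖ ≤ 1 + (Real.sinh |z.im|)⁻¹ := by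
  have hs : 0 < Real.sinh |z.im| := Real.sinh_pos_iff.mpr (abs_pos.mpr hz)
  have hcos : ‖cos z‖ ≤ 1 + Real.sinh |z.im| := by
    refine abs_le_of_sq_le_sq' ?_ (by positivity) |>.2
    rw [sq_norm_cos, ← Real.abs_sinh]
    nlinarith [Real.cos_sq_le_one z.re, sq_abs (Real.sinh z.im), abs_nonneg (Real.sinh z.im)]
  rw [cot_eq_cos_div_sin, norm_div, div_le_iff₀ (hs.trans_le (sinh_abs_im_le_norm_sin z))]
  calc ‖cos z‖ ≤ 1 + Real.sinh |z.im| := hcos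
    _ = (1 + (Real.sinh |z.im|)⁻¹) * Real.sinh |z.im| := by field_simp; ring
    _ ≤ (1 + (Real.sinh |z.im|)⁻¹) * ‖sin z‖ := by gcongr; exact sinh_abs_im_le_norm_sin z

theorem norm_le_of_mul_abs_re_le_abs_im {z : ℂ} {t : ℝ} (ht : 0 < t) (h : t * |z.re| ≤ |z.im|) :
    ‖z‖ ≤ (1 + t⁻¹) * |z.im| := by
  have hre : |z.re| ≤ t⁻¹ * |z.im| := by
    rw [inv_mul_eq_div, le_div_iff₀ ht, mul_comm]; exact h
  linarith [norm_le_abs_re_add_abs_im z]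

theorem hasDerivAt_cot {z : ℂ} (hz : sin z ≠ 0) : HasDerivAt cot (-(sin z)⁻¹ ^ 2) z := by
  have h : HasDerivAt (fun x => cos x / sin x) _ z := (hasDerivAt_cos z).div (hasDerivAt_sin z) hz
  rw [show cot = fun x => cos x / sin x from funext cot_eq_cos_div_sin]
  convert h using 1
  field_simp
  linear_combination sin_sq_add_cos_sq z

end Complex

variable {φ : ℂ}

theorem rL_zero : rL 0 = 0 := by simp [rL]

theorem rL_eq_cot_sub (hφ : φ ≠ 0) : rL φ = Complex.cot (π * φ) - (π * φ)⁻¹ - I := by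
  have hπ : (π : ℂ) ≠ 0 := ofReal_ne_zero.mpr pi_ne_zero
  rw [rL, Complex.cot_eq_cos_div_sin]
  field_simp
  ring

theorem hasDerivAt_rL (hφ : φ ≠ 0) (hs : sin (π * φ) ≠ 0) :
    HasDerivAt rL (π * ((π * φ)⁻¹ ^ 2 - (sin (π * φ))⁻¹ ^ 2)) φ := by
  have hu : (π : ℂ) * φ ≠ 0 := mul_ne_zero (ofReal_ne_zero.mpr pi_ne_zero) hφ
  have hg : HasDerivAt (fun u => Complex.cot u - u⁻¹ - I) (-(sin (π * φ))⁻¹ ^ 2 - -((π * φ) ^ 2)⁻¹)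
      (π * φ) := ((Complex.hasDerivAt_cot hs).sub (hasDerivAt_inv hu)).sub_const I
  have h := hg.comp φ ((hasDerivAt_id φ).const_mul (π : ℂ))
  have heq : rL =ᶠ[𝓝 φ] (fun u => Complex.cot u - u⁻¹ - I) ∘ fun x => (π : ℂ) * x := by
    filter_upwards [eventually_ne_nhds hφ] with ψ hψ using rL_eq_cot_sub hψ
  refine (h.congr_of_eventuallyEq heq).congr_deriv ?_
  simp only [mul_one, inv_pow]
  ring

theorem norm_rL_add_I_le (hφ0 : φ ≠ 0) (hφ : ‖(π : ℂ) * φ‖ ≤ 1) :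
    ‖rL φ + I‖ ≤ 3 * ‖(π : ℂ) * φ‖ := by
  rw [rL_eq_cot_sub hφ0, sub_add_cancel]
  exact norm_cot_sub_inv_le (mul_ne_zero (ofReal_ne_zero.mpr pi_ne_zero) hφ0) hφ

theorem norm_deriv_rL_le_of_norm_le (hφ0 : φ ≠ 0) (hφ : ‖(π : ℂ) * φ‖ ≤ 1) :
    ‖deriv rL φ‖ ≤ 3 * π := by
  have hu : (π : ℂ) * φ ≠ 0 := mul_ne_zero (ofReal_ne_zero.mpr pi_ne_zero) hφ0
  rw [(hasDerivAt_rL hφ0 (sin_ne_zero_of_norm_le_one hu hφ)).deriv, norm_mul, norm_real,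
    Real.norm_of_nonneg pi_pos.le, mul_comm]
  exact mul_le_mul_of_nonneg_right (norm_inv_sq_sub_inv_sin_sq_le hu hφ) pi_pos.le

theorem tendsto_rL_nhdsNE_zero : Tendsto rL (𝓝[≠] 0) (𝓝 (-I)) := by
  have hlin : Tendsto (fun φ : ℂ => ‖(π : ℂ) * φ‖) (𝓝[≠] 0) (𝓝 0) := by
    have : Continuous (fun φ : ℂ => ‖(π : ℂ) * φ‖) := by fun_prop
    simpa using (this.tendsto 0).mono_left nhdsWithin_le_nhds
  rw [tendsto_iff_norm_sub_tendsto_zero]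
  refine squeeze_zero' (.of_forall fun _ => norm_nonneg _) ?_ (by simpa using hlin.const_mul 3)
  filter_upwards [hlin.eventually_le_const zero_lt_one, self_mem_nhdsWithin] with φ hφ hφ0
  simpa using norm_rL_add_I_le hφ0 hφ

-- `rL 0 = 0` only because `1 / 0 = 0`; since `rL φ → -I`, `rL` is not differentiable at `0`.
theorem deriv_rL_zero : deriv rL 0 = 0 := by
  refine deriv_zero_of_not_differentiableAt fun h => I_ne_zero ?_
  have hlim := tendsto_nhds_unique (h.continuousAt.tendsto.mono_left nhdsWithin_le_nhds)
    tendsto_rL_nhdsNE_zero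
  rw [rL_zero] at hlim
  exact neg_eq_zero.mp hlim.symm

section FarFromZero

variable {ρ : ℝ}

theorem pi_mul_le_abs_im_pi_mul (h : ρ ≤ |φ.im|) : π * ρ ≤ |((π : ℂ) * φ).im| := by
  rw [im_ofReal_mul, abs_mul, abs_of_pos pi_pos]
  exact mul_le_mul_of_nonneg_left h pi_pos.le

theorem sinh_pi_mul_le_norm_sin (h : ρ ≤ |φ.im|) : Real.sinh (π * ρ) ≤ ‖sin (π * φ)‖ :=
  (Real.sinh_le_sinh.mpr (pi_mul_le_abs_im_pi_mul h)).trans (sinh_abs_im_le_norm_sin _)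

theorem norm_inv_pi_mul_le (hρ : 0 < ρ) (h : ρ ≤ |φ.im|) : ‖((π : ℂ) * φ)⁻¹‖ ≤ (π * ρ)⁻¹ := by
  rw [norm_inv, norm_mul, norm_real, Real.norm_of_nonneg pi_pos.le]
  exact inv_anti₀ (by positivity) (mul_le_mul_of_nonneg_left (h.trans (abs_im_le_norm φ)) pi_pos.le)

theorem norm_rL_le_of_le_abs_im (hρ : 0 < ρ) (h : ρ ≤ |φ.im|) :
    ‖rL φ‖ ≤ 2 + (Real.sinh (π * ρ))⁻¹ + (π * ρ)⁻¹ := by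
  have hπρ : π * ρ ≤ |((π : ℂ) * φ).im| := pi_mul_le_abs_im_pi_mul h
  have hcot : ‖Complex.cot (π * φ)‖ ≤ 1 + (Real.sinh (π * ρ))⁻¹ := by
    refine (norm_cot_le (abs_pos.mp ((by positivity : 0 < π * ρ).trans_le hπρ))).trans ?_
    gcongr
    exact Real.sinh_le_sinh.mpr hπρ
  have hφ : φ ≠ 0 := by rintro rfl; simp at h; linarith
  rw [rL_eq_cot_sub hφ]
  calc ‖Complex.cot (π * φ) - (π * φ)⁻¹ - I‖
      ≤ ‖Complex.cot (π * φ)‖ + ‖((π : ℂ) * φ)⁻¹‖ + ‖I‖ :=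
        (norm_sub_le _ _).trans (add_le_add_left (norm_sub_le _ _) _)
    _ ≤ 2 + (Real.sinh (π * ρ))⁻¹ + (π * ρ)⁻¹ := by
      rw [norm_I]; linarith [norm_inv_pi_mul_le hρ h]

theorem norm_deriv_rL_le_of_le_abs_im (hρ : 0 < ρ) (h : ρ ≤ |φ.im|) :
    ‖deriv rL φ‖ ≤ π * ((π * ρ)⁻¹ ^ 2 + (Real.sinh (π * ρ))⁻¹ ^ 2) := by
  have hsinh : 0 < Real.sinh (π * ρ) := Real.sinh_pos_iff.mpr (by positivity)
  have hs : ‖sin (π * φ)‖⁻¹ ≤ (Real.sinh (π * ρ))⁻¹ := inv_anti₀ hsinh (sinh_pi_mul_le_norm_sin h)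
  have hφ : φ ≠ 0 := by rintro rfl; simp at h; linarith
  rw [(hasDerivAt_rL hφ (norm_pos_iff.mp (hsinh.trans_le (sinh_pi_mul_le_norm_sin h)))).deriv,
    norm_mul, norm_real, Real.norm_of_nonneg pi_pos.le]
  refine mul_le_mul_of_nonneg_left ((norm_sub_le _ _).trans ?_) pi_pos.le
  rw [norm_pow, norm_pow, norm_inv (Complex.sin _)]
  exact add_le_add (pow_le_pow_left₀ (norm_nonneg _) (norm_inv_pi_mul_le hρ h) 2)
    (pow_le_pow_left₀ (by positivity) hs 2)

end FarFromZero

theorem norm_deriv_rL_le_of_one_le_abs_im (h : 1 ≤ |φ.im|) :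
    ‖deriv rL φ‖ ≤ (16 * π + π⁻¹) * (Real.exp (-(2 * π * |φ.im|)) + 1 / |φ.im| ^ 2) := by
  have hy : 0 < |φ.im| := one_pos.trans_le h
  have hdecay := Real.inv_sinh_sq_le (a := π * |φ.im|) (by nlinarith [pi_gt_three])
  have hpoly : π * (π * |φ.im|)⁻¹ ^ 2 = π⁻¹ * (1 / |φ.im| ^ 2) := by
    field_simp
  rw [← mul_assoc] at hdecay
  refine (norm_deriv_rL_le_of_le_abs_im hy le_rfl).trans ?_
  rw [mul_add, hpoly]
  have h2 : 0 ≤ 1 / |φ.im| ^ 2 := by positivity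
  nlinarith [mul_le_mul_of_nonneg_left hdecay pi_pos.le, inv_pos.mpr pi_pos, pi_pos]

theorem exists_bound_rL_of_mul_abs_re_le_abs_im {t : ℝ} (ht : 0 < t) :
    ∃ C, ∀ φ : ℂ, t * |φ.re| ≤ |φ.im| → ‖rL φ‖ ≤ C ∧ ‖deriv rL φ‖ ≤ C := by
  set ρ := (π * (1 + t⁻¹))⁻¹
  have hρ : 0 < ρ := by positivity
  set C := max (4 + 3 * π)
    (max (2 + (Real.sinh (π * ρ))⁻¹ + (π * ρ)⁻¹) (π * ((π * ρ)⁻¹ ^ 2 + (Real.sinh (π * ρ))⁻¹ ^ 2)))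
  have hnearC : 4 + 3 * π ≤ C := le_max_left _ _
  refine ⟨C, fun φ hφ => ?_⟩
  rcases eq_or_ne φ 0 with rfl | hφ0
  · rw [rL_zero, deriv_rL_zero, norm_zero, and_self]
    exact le_trans (by positivity) hnearC
  by_cases hnear : ‖(π : ℂ) * φ‖ ≤ 1
  · have hrL : ‖rL φ‖ ≤ ‖rL φ + I‖ + ‖I‖ := by simpa using norm_sub_le (rL φ + I) I
    have hrL_add := norm_rL_add_I_le hφ0 hnear
    rw [norm_I] at hrL
    exact ⟨by linarith [pi_pos], by linarith [norm_deriv_rL_le_of_norm_le hφ0 hnear, pi_pos]⟩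
  · have hfar : ρ ≤ |φ.im| := by
      rw [inv_le_iff_one_le_mul₀ (by positivity)]
      rw [not_le, norm_mul, norm_real, Real.norm_of_nonneg pi_pos.le] at hnear
      nlinarith [norm_le_of_mul_abs_re_le_abs_im ht hφ, pi_pos]
    exact ⟨(norm_rL_le_of_le_abs_im hρ hfar).trans ((le_max_left _ _).trans (le_max_right _ _)),
      (norm_deriv_rL_le_of_le_abs_im hρ hfar).trans ((le_max_right _ _).trans (le_max_right _ _))⟩

/-- Along any strictly vertical curve through `0` (modelled by the cone
`tan δ₁ · |Re φ| ≤ |Im φ|`): `|r_L(φ)| ≤ C`, and `|r_L'(φ)| ≤ C` for `|Im φ| ≤ 1` while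
`|r_L'(φ)| ≤ C(e^{-2π|Im φ|} + |Im φ|⁻²)` for `|Im φ| ≥ 1`, with `C = C(δ₁)`. -/
theorem stmt10 (δ₁ : ℝ) (hδ₁ : 0 < δ₁) (hδ₁' : δ₁ < π / 2) :
    ∃ C : ℝ, 0 < C ∧ ∀ φ : ℂ, Real.tan δ₁ * |φ.re| ≤ |φ.im| →
      ‖rL φ‖ ≤ C ∧
      (|φ.im| ≤ 1 → ‖deriv rL φ‖ ≤ C) ∧
      (1 ≤ |φ.im| →
        ‖deriv rL φ‖ ≤ C * (Real.exp (-(2 * π * |φ.im|)) + 1 / |φ.im| ^ 2)) := by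
  obtain ⟨C, hC⟩ :=
    exists_bound_rL_of_mul_abs_re_le_abs_im (Real.tan_pos_of_pos_of_lt_pi_div_two hδ₁ hδ₁')
  refine ⟨max C (16 * π + π⁻¹), by positivity, fun φ hφ => ⟨?_, fun _ => ?_, fun h => ?_⟩⟩
  · exact (hC φ hφ).1.trans (le_max_left _ _)
  · exact (hC φ hφ).2.trans (le_max_left _ _)
  · exact (norm_deriv_rL_le_of_one_le_abs_im h).trans
      (mul_le_mul_of_nonneg_right (le_max_right _ _) (by positivity))
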